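/- Under Assumption 1 and consistency of potential outcomes, if Σ_{t=1}^T P(I_{jkt}(i) = 1) > 0 and the per-individual summed IPW terms Σ_{t=1}^T I_{jkt}(i) · 1{A_{i,t}=j} Y_{i,t} / π_j^t(Z_{i,t}) are integrable, then the IPW and stabilized IPW estimators are consistent: θ̂^{ipw}_{jk} → θ_{jk} and θ̂^{sipw}_{jk} → θ_{jk} in probability as n → ∞. -/

import Mathlib

/-!
Framework for master protocol trials with re-enrollment.
-/

open MeasureTheory ProbabilityTheory Filter Topology
open scoped Classical ENNReal NNReal

namespace MasterProtocol

/-- The setup of a master protocol trial with re-enrollment (Section 2.2 of the paper),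
for a single generic individual with distribution `μ` on `Ω`.  Treatments take values in
`Fin J`, episodes range over `1, …, Tmax`.  Includes the consistency of potential outcomes
and Assumption 1 (sequential treatment randomization). -/
structure Setup (Ω 𝒵 𝒳 : Type*) [m0 : MeasurableSpace Ω] [StandardBorelSpace Ω] [Nonempty Ω]
    [MeasurableSpace 𝒵] [MeasurableSpace 𝒳]
    (μ : Measure Ω) [IsProbabilityMeasure μ] (J Tmax : ℕ) where
  /-- `T ω` : total number of treatment episodes attended -/
  T : Ω → ℕ
  /-- `A t ω` : treatment assignment at episode `t` -/
  A : ℕ → Ω → Fin J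
  /-- `Y t ω` : observed outcome at episode `t` -/
  Y : ℕ → Ω → ℝ
  /-- `Z t ω` : subset of observed history used for eligibility/assignment at episode `t` -/
  Z : ℕ → Ω → 𝒵
  /-- `Xc t ω` : baseline covariates measured before episode-`t` assignment -/
  Xc : ℕ → Ω → 𝒳
  /-- `Ypot t j ω` : the potential outcome `Y_{t}^{(Ā_{t-1}, j)}` at episode `t` under the
  actually received treatment history up to `t-1` followed by treatment `j` at episode `t` -/
  Ypot : ℕ → Fin J → Ω → ℝ
  /-- `pi j t` : known randomization probability functions `π_j^t` -/
  pi : Fin J → ℕ → 𝒵 → ℝ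
  /-- `hist t` : the σ-algebra of the observed history `F_{t-1}` prior to episode-`t`
  assignment -/
  hist : ℕ → MeasurableSpace Ω
  hist_le : ∀ t, hist t ≤ m0
  measurable_T : Measurable T
  measurable_A : ∀ t, Measurable (A t)
  measurable_Y : ∀ t, Measurable (Y t)
  measurable_Z : ∀ t, Measurable[hist t] (Z t)
  measurable_Xc : ∀ t, Measurable[hist t] (Xc t)
  measurable_Ypot : ∀ t j, Measurable (Ypot t j)
  measurable_pi : ∀ j t, Measurable (pi j t)
  pi_nonneg : ∀ j t z, 0 ≤ pi j t z
  pi_sum_one : ∀ t z, ∑ j, pi j t z = 1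
  integrable_Y : ∀ t, Integrable (Y t) μ
  integrable_Ypot : ∀ t j, Integrable (Ypot t j) μ
  /-- Consistency: the observed outcome is the potential outcome under the received
  treatment history. -/
  consistency : ∀ t ω, Y t ω = Ypot t (A t ω) ω
  /-- Assumption 1(i): conditionally on the observed history and on attending episode `t`
  (i.e. on the event `{T ≥ t}`), the treatment assignment at episode `t` is independent of the
  potential outcomes. -/
  rand_indep : ∀ t, 1 ≤ t → ∀ j : Fin J,
    CondIndepFun (hist t) (hist_le t) (A t) (Ypot t j) (μ.restrict {ω | t ≤ T ω})
  /-- Assumption 1(ii): on the event `{T ≥ t}`, the probability of assignment to arm `j` at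
  episode `t` given the observed history is `π_j^t(Z_t)`. -/
  rand_prob : ∀ t, 1 ≤ t → ∀ j : Fin J,
    (μ.restrict {ω | t ≤ T ω})[({ω | A t ω = j}).indicator (fun _ => (1 : ℝ)) | hist t]
      =ᵐ[μ.restrict {ω | t ≤ T ω}] fun ω => pi j t (Z t ω)

variable {Ω 𝒵 𝒳 : Type*} [MeasurableSpace Ω] [StandardBorelSpace Ω] [Nonempty Ω]
  [MeasurableSpace 𝒵] [MeasurableSpace 𝒳]
  {μ : Measure Ω} [IsProbabilityMeasure μ] {J Tmax : ℕ}

/-- The episode-`t` entire concurrently eligible (ECE) population for comparing treatments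
`j` and `k` : individuals with `π_j^t(Z_t) > 0`, `π_k^t(Z_t) > 0` and `T ≥ t`. -/
def ECE (S : Setup Ω 𝒵 𝒳 μ J Tmax) (j k : Fin J) (t : ℕ) : Set Ω :=
  {ω | 0 < S.pi j t (S.Z t ω) ∧ 0 < S.pi k t (S.Z t ω) ∧ t ≤ S.T ω}

/-- `P(I_{jkt}(i) = 1)`, the probability of membership in the episode-`t` ECE population. -/
noncomputable def probECE (S : Setup Ω 𝒵 𝒳 μ J Tmax) (j k : Fin J) (t : ℕ) : ℝ :=
  (μ (ECE S j k t)).toReal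

/-- `θ_{jkt} = E[ Y_t^{(Ā_{t-1}, j)} | I_{jkt} = 1 ]`. -/
noncomputable def thetaT (S : Setup Ω 𝒵 𝒳 μ J Tmax) (j k : Fin J) (t : ℕ) : ℝ :=
  ∫ ω, S.Ypot t j ω ∂(μ[|ECE S j k t])

/-- The per-episode added-effect estimand
`θ_{jk} = Σ_t P(I_{jkt}=1) θ_{jkt} / Σ_t P(I_{jkt}=1)`. -/
noncomputable def theta (S : Setup Ω 𝒵 𝒳 μ J Tmax) (j k : Fin J) : ℝ :=
  (∑ t ∈ Finset.Icc 1 Tmax, probECE S j k t * thetaT S j k t) /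
    (∑ t ∈ Finset.Icc 1 Tmax, probECE S j k t)

/-- Per-individual summed IPW term `Σ_t I_{jkt} · 1{A_t = j} Y_t / π_j^t(Z_t)`. -/
noncomputable def ipwNum (S : Setup Ω 𝒵 𝒳 μ J Tmax) (j k : Fin J) (ω : Ω) : ℝ :=
  ∑ t ∈ Finset.Icc 1 Tmax,
    if ω ∈ ECE S j k t then (if S.A t ω = j then S.Y t ω / S.pi j t (S.Z t ω) else 0) else 0

/-- Per-individual count of ECE memberships `Σ_t I_{jkt}`. -/
noncomputable def eceCount (S : Setup Ω 𝒵 𝒳 μ J Tmax) (j k : Fin J) (ω : Ω) : ℝ :=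
  ∑ t ∈ Finset.Icc 1 Tmax, if ω ∈ ECE S j k t then (1 : ℝ) else 0

/-- Per-individual summed inverse-probability weights `Σ_t I_{jkt} · 1{A_t = j} / π_j^t(Z_t)`. -/
noncomputable def ipwWeight (S : Setup Ω 𝒵 𝒳 μ J Tmax) (j k : Fin J) (ω : Ω) : ℝ :=
  ∑ t ∈ Finset.Icc 1 Tmax,
    if ω ∈ ECE S j k t then (if S.A t ω = j then 1 / S.pi j t (S.Z t ω) else 0) else 0

/-- The IPW estimator `θ̂^{ipw}_{jk}` based on the first `n` individuals `X 0, …, X (n-1)`. -/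
noncomputable def ipwEst {Ω' : Type*} (S : Setup Ω 𝒵 𝒳 μ J Tmax) (j k : Fin J)
    (X : ℕ → Ω' → Ω) (n : ℕ) (ω' : Ω') : ℝ :=
  (∑ i ∈ Finset.range n, ipwNum S j k (X i ω')) /
    (∑ i ∈ Finset.range n, eceCount S j k (X i ω'))

/-- The stabilized IPW estimator `θ̂^{sipw}_{jk}`. -/
noncomputable def sipwEst {Ω' : Type*} (S : Setup Ω 𝒵 𝒳 μ J Tmax) (j k : Fin J)
    (X : ℕ → Ω' → Ω) (n : ℕ) (ω' : Ω') : ℝ :=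
  (∑ i ∈ Finset.range n, ipwNum S j k (X i ω')) /
    (∑ i ∈ Finset.range n, ipwWeight S j k (X i ω'))

/-- The influence function `φ^{ipw}_{jk}` of the IPW estimator. -/
noncomputable def phiIPW (S : Setup Ω 𝒵 𝒳 μ J Tmax) (j k : Fin J) (ω : Ω) : ℝ :=
  (∑ t ∈ Finset.Icc 1 Tmax, probECE S j k t)⁻¹ *
    ∑ t ∈ Finset.Icc 1 Tmax,
      if ω ∈ ECE S j k t then
        (if S.A t ω = j then S.Y t ω / S.pi j t (S.Z t ω) else 0) - theta S j k
      else 0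

/-- The influence function `φ^{sipw}_{jk}` of the stabilized IPW estimator. -/
noncomputable def phiSIPW (S : Setup Ω 𝒵 𝒳 μ J Tmax) (j k : Fin J) (ω : Ω) : ℝ :=
  (∑ t ∈ Finset.Icc 1 Tmax, probECE S j k t)⁻¹ *
    ∑ t ∈ Finset.Icc 1 Tmax,
      if ω ∈ ECE S j k t then
        (if S.A t ω = j then (S.Y t ω - theta S j k) / S.pi j t (S.Z t ω) else 0)
      else 0

/-- An i.i.d. sample `X 0, X 1, …` of individuals, each with distribution `μ`. -/
structure IIDSample {Ω' : Type*} [MeasurableSpace Ω'] (P : Measure Ω')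
    (μ : Measure Ω) (X : ℕ → Ω' → Ω) : Prop where
  measurable : ∀ i, Measurable (X i)
  indep : iIndepFun (m := fun _ => ‹MeasurableSpace Ω›) X P
  ident : ∀ i, Measure.map (X i) P = μ

/-- Convergence in distribution (weak convergence, tested against bounded continuous
functions) of a sequence of real random variables to a centered Gaussian with variance `v`
(`v` truncated at `0`). -/
def TendstoInDistNormal {Ω' : Type*} [MeasurableSpace Ω'] (P : Measure Ω')
    (W : ℕ → Ω' → ℝ) (v : ℝ) : Prop :=
  ∀ f : BoundedContinuousFunction ℝ ℝ,
    Tendsto (fun n => ∫ ω', f (W n ω') ∂P) atTop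
      (𝓝 (∫ x, f x ∂(gaussianReal 0 (Real.toNNReal v))))

/-- Convergence in probability of a sequence of real random variables to a constant. -/
def TendstoInProb {Ω' : Type*} [MeasurableSpace Ω'] (P : Measure Ω')
    (W : ℕ → Ω' → ℝ) (c : ℝ) : Prop :=
  ∀ ε : ℝ, 0 < ε → Tendsto (fun n => P {ω' | ε ≤ |W n ω' - c|}) atTop (𝓝 0)


/-- A stratification of the episode-`t` ECE populations (for the post-stratification
estimators): at each episode `t` the ECE population is partitioned into strata
`1, …, H t`, on each of which both `π_j^t(Z_t)` and `π_k^t(Z_t)` are constant.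
`G t ω = h` iff `ω` belongs to the `h`-th stratum. -/
structure Strata (S : Setup Ω 𝒵 𝒳 μ J Tmax) (j k : Fin J) where
  /-- stratum label at episode `t` -/
  G : ℕ → Ω → ℕ
  /-- number of strata `H_{jkt}` at episode `t` -/
  H : ℕ → ℕ
  measurable_G : ∀ t, Measurable (G t)
  /-- every member of the episode-`t` ECE population belongs to one of the `H t` strata -/
  mem_stratum : ∀ t ω, ω ∈ ECE S j k t → G t ω ∈ Finset.Icc 1 (H t)
  /-- `G t ω = h` (for a valid label `h`) implies ECE membership -/
  stratum_subset : ∀ t ω, G t ω ∈ Finset.Icc 1 (H t) → ω ∈ ECE S j k t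
  /-- `π_j^t(Z_t)` is constant on each stratum -/
  pi_j_const : ∀ t ω ω', ω ∈ ECE S j k t → ω' ∈ ECE S j k t → G t ω = G t ω' →
    S.pi j t (S.Z t ω) = S.pi j t (S.Z t ω')
  /-- `π_k^t(Z_t)` is constant on each stratum -/
  pi_k_const : ∀ t ω ω', ω ∈ ECE S j k t → ω' ∈ ECE S j k t → G t ω = G t ω' →
    S.pi k t (S.Z t ω) = S.pi k t (S.Z t ω')

variable {S : Setup Ω 𝒵 𝒳 μ J Tmax} {j k : Fin J}

/-- `E(Y_t | A_t = j, G_t = h)`. -/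
noncomputable def condMeanY (S : Setup Ω 𝒵 𝒳 μ J Tmax) (j k : Fin J) (St : Strata S j k)
    (t h : ℕ) : ℝ :=
  ∫ ω, S.Y t ω ∂(μ[|{ω | S.A t ω = j ∧ St.G t ω = h}])

/-- `P(A_t = j | G_t = h)`. -/
noncomputable def condPj (S : Setup Ω 𝒵 𝒳 μ J Tmax) (j k : Fin J) (St : Strata S j k)
    (t h : ℕ) : ℝ :=
  ((μ[|{ω | St.G t ω = h}]) {ω | S.A t ω = j}).toReal

/-- The post-stratification estimator `θ̂^{ps}_{jk}` based on the first `n` individuals. -/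
noncomputable def psEst {Ω' : Type*} (S : Setup Ω 𝒵 𝒳 μ J Tmax) (j k : Fin J)
    (St : Strata S j k) (X : ℕ → Ω' → Ω) (n : ℕ) (ω' : Ω') : ℝ :=
  (∑ t ∈ Finset.Icc 1 Tmax, ∑ h ∈ Finset.Icc 1 (St.H t),
      ((∑ i ∈ Finset.range n, if St.G t (X i ω') = h then (1 : ℝ) else 0) /
          (∑ i ∈ Finset.range n,
            if S.A t (X i ω') = j ∧ St.G t (X i ω') = h then (1 : ℝ) else 0)) *
        ∑ i ∈ Finset.range n,
          if S.A t (X i ω') = j ∧ St.G t (X i ω') = h then S.Y t (X i ω') else 0) /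
    (∑ i ∈ Finset.range n, eceCount S j k (X i ω'))

/-- The influence function `φ^{ps}_{jk}` of the post-stratification estimator. -/
noncomputable def phiPS (S : Setup Ω 𝒵 𝒳 μ J Tmax) (j k : Fin J) (St : Strata S j k)
    (ω : Ω) : ℝ :=
  (∑ t ∈ Finset.Icc 1 Tmax, probECE S j k t)⁻¹ *
    ∑ t ∈ Finset.Icc 1 Tmax, ∑ h ∈ Finset.Icc 1 (St.H t),
      ((if S.A t ω = j ∧ St.G t ω = h then
          (S.Y t ω - condMeanY S j k St t h) / condPj S j k St t h
        else 0) +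
        (if St.G t ω = h then condMeanY S j k St t h - theta S j k else 0))

/-- Per-individual summed AIPW term, for a given collection of (episode-specific) working
models `m t : 𝒳 → ℝ`. -/
noncomputable def aipwTerm (S : Setup Ω 𝒵 𝒳 μ J Tmax) (j k : Fin J)
    (m : ℕ → 𝒳 → ℝ) (ω : Ω) : ℝ :=
  ∑ t ∈ Finset.Icc 1 Tmax,
    if ω ∈ ECE S j k t then
      (if S.A t ω = j then (S.Y t ω - m t (S.Xc t ω)) / S.pi j t (S.Z t ω) else 0) +
        m t (S.Xc t ω)
    else 0

/-- The AIPW estimator `θ̂^{aipw}_{jk}` based on the first `n` individuals, where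
`muhat n t ω'` is the estimated (data-dependent) working model for episode `t` at
sample size `n`. -/
noncomputable def aipwEst {Ω' : Type*} (S : Setup Ω 𝒵 𝒳 μ J Tmax) (j k : Fin J)
    (muhat : ℕ → ℕ → Ω' → 𝒳 → ℝ) (X : ℕ → Ω' → Ω) (n : ℕ) (ω' : Ω') : ℝ :=
  (∑ i ∈ Finset.range n, aipwTerm S j k (fun t => muhat n t ω') (X i ω')) /
    (∑ i ∈ Finset.range n, eceCount S j k (X i ω'))

/-- The influence function `φ^{aipw}_{jk}` of the AIPW estimator, with limiting working
models `m t`. -/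
noncomputable def phiAIPW (S : Setup Ω 𝒵 𝒳 μ J Tmax) (j k : Fin J)
    (m : ℕ → 𝒳 → ℝ) (ω : Ω) : ℝ :=
  (∑ t ∈ Finset.Icc 1 Tmax, probECE S j k t)⁻¹ *
    ∑ t ∈ Finset.Icc 1 Tmax,
      if ω ∈ ECE S j k t then
        (if S.A t ω = j then (S.Y t ω - m t (S.Xc t ω)) / S.pi j t (S.Z t ω) else 0) +
          m t (S.Xc t ω) - theta S j k
      else 0

/-- `μ̄_{jkt}(h) = E[ μ_{jkt}(X_t) | G_t = h ]`. -/
noncomputable def muBar (S : Setup Ω 𝒵 𝒳 μ J Tmax) (j k : Fin J) (St : Strata S j k)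
    (m : ℕ → 𝒳 → ℝ) (t h : ℕ) : ℝ :=
  ∫ ω, m t (S.Xc t ω) ∂(μ[|{ω | St.G t ω = h}])

/-- The adjusted post-stratification estimator `θ̂^{aps}_{jk}` based on the first `n`
individuals. -/
noncomputable def apsEst {Ω' : Type*} (S : Setup Ω 𝒵 𝒳 μ J Tmax) (j k : Fin J)
    (St : Strata S j k) (muhat : ℕ → ℕ → Ω' → 𝒳 → ℝ) (X : ℕ → Ω' → Ω) (n : ℕ)
    (ω' : Ω') : ℝ :=
  (∑ t ∈ Finset.Icc 1 Tmax, ∑ h ∈ Finset.Icc 1 (St.H t),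
        ((∑ i ∈ Finset.range n, if St.G t (X i ω') = h then (1 : ℝ) else 0) /
            (∑ i ∈ Finset.range n,
              if S.A t (X i ω') = j ∧ St.G t (X i ω') = h then (1 : ℝ) else 0)) *
          ∑ i ∈ Finset.range n,
            if S.A t (X i ω') = j ∧ St.G t (X i ω') = h then
              S.Y t (X i ω') - muhat n t ω' (S.Xc t (X i ω'))
            else 0) /
      (∑ i ∈ Finset.range n, eceCount S j k (X i ω')) +
    (∑ i ∈ Finset.range n, ∑ t ∈ Finset.Icc 1 Tmax,
        if X i ω' ∈ ECE S j k t then muhat n t ω' (S.Xc t (X i ω')) else 0) /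
      (∑ i ∈ Finset.range n, eceCount S j k (X i ω'))

/-- The influence function `φ^{aps}_{jk}` of the adjusted post-stratification estimator. -/
noncomputable def phiAPS (S : Setup Ω 𝒵 𝒳 μ J Tmax) (j k : Fin J) (St : Strata S j k)
    (m : ℕ → 𝒳 → ℝ) (ω : Ω) : ℝ :=
  (∑ t ∈ Finset.Icc 1 Tmax, probECE S j k t)⁻¹ *
    ∑ t ∈ Finset.Icc 1 Tmax, ∑ h ∈ Finset.Icc 1 (St.H t),
      ((if S.A t ω = j ∧ St.G t ω = h then
          (S.Y t ω - m t (S.Xc t ω) + muBar S j k St m t h - condMeanY S j k St t h) /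
            condPj S j k St t h
        else 0) +
        (if St.G t ω = h then
          condMeanY S j k St t h + m t (S.Xc t ω) - muBar S j k St m t h - theta S j k
        else 0))

/-! ### The Donsker (uniform entropy integral) condition of Assumption 2 -/

/-- The `ε`-covering number of a class `𝓕` with respect to a (pseudo-)distance `d` :
the smallest cardinality of a finite `ε`-net for `𝓕`. -/
noncomputable def coveringNumber {F : Type*} (𝓕 : Set F) (d : F → F → ℝ) (ε : ℝ) : ℝ≥0∞ :=
  ⨅ (s : Finset F) (_ : ∀ f ∈ 𝓕, ∃ g ∈ s, d f g ≤ ε), (s.card : ℝ≥0∞)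

/-- A finitely supported probability distribution on `𝒳`, represented as a finitely
supported function with nonnegative values summing to one. -/
def IsFinSuppProb {𝒳 : Type*} (q : 𝒳 →₀ ℝ) : Prop :=
  (∀ x, 0 ≤ q x) ∧ (∑ x ∈ q.support, q x) = 1

/-- The `L₂(Q)` pseudo-distance between two functions, for a finitely supported
distribution `q`. -/
noncomputable def L2dist {𝒳 : Type*} (q : 𝒳 →₀ ℝ) (f g : 𝒳 → ℝ) : ℝ :=
  Real.sqrt (∑ x ∈ q.support, q x * (f x - g x) ^ 2)

/-- The uniform entropy integral condition (Donsker condition) for a class of functions: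
`∫₀¹ sup_Q √(log N(𝓕, L₂(Q), s)) ds < ∞`, the supremum being over all finitely supported
probability distributions `Q`. -/
def UniformEntropyCondition {𝒳 : Type*} (𝓕 : Set (𝒳 → ℝ)) : Prop :=
  (∀ (q : 𝒳 →₀ ℝ), IsFinSuppProb q → ∀ s : ℝ, 0 < s →
      coveringNumber 𝓕 (L2dist q) s ≠ ⊤) ∧
    (∫⁻ s in Set.Ioc (0 : ℝ) 1,
        ⨆ q : {q : 𝒳 →₀ ℝ // IsFinSuppProb q},
          ENNReal.ofReal (Real.sqrt (Real.log (coveringNumber 𝓕 (L2dist q.1) s).toReal)))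
      < ⊤

/-- Assumption 2 (stability) for the episode-`t` working model: the data-dependent working
model `muhat · t` converges in probability, in `L₂` of the covariate distribution, to a fixed
square-integrable function `m t`, and (Donsker condition) eventually lies in a class with a
finite uniform entropy integral containing `m t`. -/
structure Stability {Ω' : Type*} [MeasurableSpace Ω'] (P : Measure Ω')
    (S : Setup Ω 𝒵 𝒳 μ J Tmax)
    (muhat : ℕ → ℕ → Ω' → 𝒳 → ℝ) (m : ℕ → 𝒳 → ℝ) (t : ℕ) : Prop where
  measurable_m : Measurable (m t)
  square_integrable : MemLp (fun ω => m t (S.Xc t ω)) 2 μ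
  l2_tendsto : ∀ ε : ℝ, 0 < ε →
    Tendsto (fun n =>
        P {ω' | ε ≤ ∫ ω, (muhat n t ω' (S.Xc t ω) - m t (S.Xc t ω)) ^ 2 ∂μ})
      atTop (𝓝 0)
  donsker : ∃ 𝓕 : Set (𝒳 → ℝ), m t ∈ 𝓕 ∧ UniformEntropyCondition 𝓕 ∧
    Tendsto (fun n => P {ω' | muhat n t ω' ∈ 𝓕}) atTop (𝓝 1)


section AuxProof

variable {S : Setup Ω 𝒵 𝒳 μ J Tmax} {j k : Fin J}

/-- The hist-measurable "both arms possible" set. -/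
def Bset (S : Setup Ω 𝒵 𝒳 μ J Tmax) (j k : Fin J) (t : ℕ) : Set Ω :=
  {ω | 0 < S.pi j t (S.Z t ω) ∧ 0 < S.pi k t (S.Z t ω)}

lemma measurable_piZ (S : Setup Ω 𝒵 𝒳 μ J Tmax) (j : Fin J) (t : ℕ) :
    Measurable[S.hist t] (fun ω => S.pi j t (S.Z t ω)) :=
  (S.measurable_pi j t).comp (S.measurable_Z t)

lemma measurableSet_Bset (S : Setup Ω 𝒵 𝒳 μ J Tmax) (j k : Fin J) (t : ℕ) :
    MeasurableSet[S.hist t] (Bset S j k t) :=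
  ((measurableSet_lt measurable_const (measurable_piZ S j t)).inter
    (measurableSet_lt measurable_const (measurable_piZ S k t)))

lemma ECE_eq (S : Setup Ω 𝒵 𝒳 μ J Tmax) (j k : Fin J) (t : ℕ) :
    ECE S j k t = Bset S j k t ∩ {ω | t ≤ S.T ω} := by
  ext ω; simp only [ECE, Bset, Set.mem_inter_iff, Set.mem_setOf_eq]; tauto

lemma measurableSet_TgE (S : Setup Ω 𝒵 𝒳 μ J Tmax) (t : ℕ) :
    MeasurableSet {ω | t ≤ S.T ω} :=
  S.measurable_T measurableSet_Ici

lemma measurableSet_ECE (S : Setup Ω 𝒵 𝒳 μ J Tmax) (j k : Fin J) (t : ℕ) :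
    MeasurableSet (ECE S j k t) := by
  rw [ECE_eq]
  exact (S.hist_le t _ (measurableSet_Bset S j k t)).inter (measurableSet_TgE S t)

lemma measurableSet_Aj (S : Setup Ω 𝒵 𝒳 μ J Tmax) (j : Fin J) (t : ℕ) :
    MeasurableSet {ω | S.A t ω = j} :=
  S.measurable_A t (measurableSet_singleton j)

end AuxProof
section AuxProof2

variable {S : Setup Ω 𝒵 𝒳 μ J Tmax} {j k : Fin J}

lemma key_indicator (S : Setup Ω 𝒵 𝒳 μ J Tmax) (j : Fin J) (t : ℕ) (ht : 1 ≤ t)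
    (u : Set Ω) (hu : MeasurableSet u)
    (hprod : (μ.restrict {ω | t ≤ S.T ω})⟦{ω | S.A t ω = j} ∩ u | S.hist t⟧
      =ᵐ[μ.restrict {ω | t ≤ S.T ω}]
      fun ω => ((μ.restrict {ω | t ≤ S.T ω})⟦{ω | S.A t ω = j} | S.hist t⟧) ω *
        ((μ.restrict {ω | t ≤ S.T ω})⟦u | S.hist t⟧) ω)
    (h' : Ω → ℝ) (hh' : Measurable[S.hist t] h') (C : ℝ) (hC : ∀ ω, |h' ω| ≤ C) :
    ∫ ω, h' ω * (({ω | S.A t ω = j} ∩ u).indicator (fun _ => (1:ℝ)) ω)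
        ∂(μ.restrict {ω | t ≤ S.T ω})
      = ∫ ω, (h' ω * S.pi j t (S.Z t ω)) * (u.indicator (fun _ => (1:ℝ)) ω)
        ∂(μ.restrict {ω | t ≤ S.T ω}) := by
  set ν := μ.restrict {ω | t ≤ S.T ω} with hν
  have hm : S.hist t ≤ ‹MeasurableSpace Ω› := S.hist_le t
  haveI : IsFiniteMeasure ν := by
    constructor
    exact lt_of_le_of_lt (Measure.restrict_apply_le _ _) (measure_lt_top μ _)
  haveI : SigmaFinite (ν.trim hm) := by infer_instance
  have hsm : MeasurableSet {ω | S.A t ω = j} := measurableSet_Aj S j t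
  have hh'0 : AEStronglyMeasurable h' ν :=
    ((hh'.mono hm le_rfl).stronglyMeasurable).aestronglyMeasurable
  have hbd : ∃ C, ∀ ω, ‖h' ω‖ ≤ C := ⟨C, fun ω => by simpa [Real.norm_eq_abs] using hC ω⟩
  -- integrable indicators
  have hint1 : Integrable (({ω | S.A t ω = j} ∩ u).indicator (fun _ => (1:ℝ))) ν :=
    (integrable_const (1:ℝ)).indicator (hsm.inter hu)
  have hintu : Integrable (u.indicator (fun _ => (1:ℝ))) ν :=
    (integrable_const (1:ℝ)).indicator hu
  have hπm : Measurable[S.hist t] (fun ω => S.pi j t (S.Z t ω)) := measurable_piZ S j t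
  have hπ01 : ∀ ω, S.pi j t (S.Z t ω) ∈ Set.Icc (0:ℝ) 1 := by
    intro ω
    refine ⟨S.pi_nonneg j t _, ?_⟩
    have := S.pi_sum_one t (S.Z t ω)
    calc S.pi j t (S.Z t ω) ≤ ∑ i, S.pi i t (S.Z t ω) :=
          Finset.single_le_sum (fun i _ => S.pi_nonneg i t _) (Finset.mem_univ j)
      _ = 1 := this
  -- chain of a.e. equalities for the conditional expectations
  have e1 : ν[fun ω => h' ω * (({ω | S.A t ω = j} ∩ u).indicator (fun _ => (1:ℝ)) ω)
        | S.hist t] =ᵐ[ν]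
      fun ω => h' ω * (ν⟦{ω | S.A t ω = j} ∩ u | S.hist t⟧) ω := by
    have := condExp_mul_of_stronglyMeasurable_left (μ := ν) (m := S.hist t)
      hh'.stronglyMeasurable
      (hint1.bdd_mul hh'0 (Eventually.of_forall hbd.choose_spec)) hint1
    exact this
  have e2 : (fun ω => h' ω * (ν⟦{ω | S.A t ω = j} ∩ u | S.hist t⟧) ω) =ᵐ[ν]
      fun ω => (h' ω * S.pi j t (S.Z t ω)) * (ν⟦u | S.hist t⟧) ω := by
    filter_upwards [hprod, S.rand_prob t ht j] with ω h1 h2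
    rw [h1, ← h2, mul_assoc]
  have e3 : (fun ω => (h' ω * S.pi j t (S.Z t ω)) * (ν⟦u | S.hist t⟧) ω) =ᵐ[ν]
      ν[fun ω => (h' ω * S.pi j t (S.Z t ω)) * (u.indicator (fun _ => (1:ℝ)) ω)
        | S.hist t] := by
    have hsm2 : StronglyMeasurable[S.hist t] (fun ω => h' ω * S.pi j t (S.Z t ω)) :=
      (hh'.mul hπm).stronglyMeasurable
    have hbd2 : ∃ C, ∀ ω, ‖h' ω * S.pi j t (S.Z t ω)‖ ≤ C := by
      refine ⟨C, fun ω => ?_⟩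
      rw [norm_mul]
      calc ‖h' ω‖ * ‖S.pi j t (S.Z t ω)‖ ≤ C * 1 := by
            apply mul_le_mul
            · simpa [Real.norm_eq_abs] using hC ω
            · rw [Real.norm_eq_abs, abs_of_nonneg (hπ01 ω).1]; exact (hπ01 ω).2
            · exact norm_nonneg _
            · exact le_trans (abs_nonneg _) (hC (Classical.arbitrary Ω))
        _ = C := mul_one C
    have hmeas2 : AEStronglyMeasurable (fun ω => h' ω * S.pi j t (S.Z t ω)) ν :=
      ((hsm2.mono hm).aestronglyMeasurable)
    exact (condExp_mul_of_stronglyMeasurable_left (μ := ν) hsm2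
      (hintu.bdd_mul hmeas2 (Eventually.of_forall hbd2.choose_spec)) hintu).symm
  calc ∫ ω, h' ω * (({ω | S.A t ω = j} ∩ u).indicator (fun _ => (1:ℝ)) ω) ∂ν
      = ∫ ω, (ν[fun ω => h' ω *
          (({ω | S.A t ω = j} ∩ u).indicator (fun _ => (1:ℝ)) ω) | S.hist t]) ω ∂ν :=
        (integral_condExp hm).symm
    _ = ∫ ω, (ν[fun ω => (h' ω * S.pi j t (S.Z t ω)) *
          (u.indicator (fun _ => (1:ℝ)) ω) | S.hist t]) ω ∂ν :=
        integral_congr_ae ((e1.trans e2).trans e3)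
    _ = ∫ ω, (h' ω * S.pi j t (S.Z t ω)) * (u.indicator (fun _ => (1:ℝ)) ω) ∂ν :=
        integral_condExp hm

end AuxProof2
section AuxProof3

variable {S : Setup Ω 𝒵 𝒳 μ J Tmax} {j k : Fin J}

/-- a constant function is conditionally independent of the assignment -/
lemma condIndepFun_const (S : Setup Ω 𝒵 𝒳 μ J Tmax) (t : ℕ) (ν : Measure Ω)
    [IsFiniteMeasure ν] (c : ℝ) :
    CondIndepFun (S.hist t) (S.hist_le t) (S.A t) (fun _ => c) ν := by
  rw [condIndepFun_iff_condExp_inter_preimage_eq_mul (S.measurable_A t) measurable_const]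
  intro s u hs hu
  by_cases hc : c ∈ u
  · have h1 : (fun _ : Ω => c) ⁻¹' u = Set.univ := by ext ω; simp [hc]
    rw [h1, Set.inter_univ]
    have h2 : (Set.univ : Set Ω).indicator (fun _ => (1:ℝ)) = fun _ => (1:ℝ) := by
      ext ω; simp
    rw [h2, condExp_const (S.hist_le t) (1:ℝ)]
    refine Eventually.of_forall fun ω => ?_
    simp
  · have h1 : (fun _ : Ω => c) ⁻¹' u = (∅ : Set Ω) := by ext ω; simp [hc]
    rw [h1, Set.inter_empty]
    have h2 : ((∅ : Set Ω)).indicator (fun _ => (1:ℝ)) = fun _ => (0:ℝ) := by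
      ext ω; simp
    rw [h2, condExp_const (S.hist_le t) (0:ℝ)]
    refine Eventually.of_forall fun ω => ?_
    simp

/-- The key identity: for bounded `hist t`-measurable `h'`,
`∫ h' · 1{A_t = j} · g = ∫ h' · π_j(Z_t) · g` on `μ.restrict {t ≤ T}`. -/
lemma key (S : Setup Ω 𝒵 𝒳 μ J Tmax) (j : Fin J) (t : ℕ) (ht : 1 ≤ t)
    (g : Ω → ℝ) (hgm : Measurable g) (hgi : Integrable g (μ.restrict {ω | t ≤ S.T ω}))
    (hci : CondIndepFun (S.hist t) (S.hist_le t) (S.A t) g (μ.restrict {ω | t ≤ S.T ω}))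
    (h' : Ω → ℝ) (hh' : Measurable[S.hist t] h') (C : ℝ) (hC : ∀ ω, |h' ω| ≤ C) :
    ∫ ω, h' ω * (if S.A t ω = j then g ω else 0) ∂(μ.restrict {ω | t ≤ S.T ω})
      = ∫ ω, (h' ω * S.pi j t (S.Z t ω)) * g ω ∂(μ.restrict {ω | t ≤ S.T ω}) := by
  set ν := μ.restrict {ω | t ≤ S.T ω} with hν
  haveI : IsFiniteMeasure ν := by
    constructor
    exact lt_of_le_of_lt (Measure.restrict_apply_le _ _) (measure_lt_top μ _)
  have hm : S.hist t ≤ ‹MeasurableSpace Ω› := S.hist_le t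
  have hh'amb : Measurable h' := hh'.mono hm le_rfl
  have hπm : Measurable (fun ω => S.pi j t (S.Z t ω)) :=
    (measurable_piZ S j t).mono hm le_rfl
  have hπ01 : ∀ ω, S.pi j t (S.Z t ω) ∈ Set.Icc (0:ℝ) 1 := by
    intro ω
    refine ⟨S.pi_nonneg j t _, ?_⟩
    calc S.pi j t (S.Z t ω) ≤ ∑ i, S.pi i t (S.Z t ω) :=
          Finset.single_le_sum (fun i _ => S.pi_nonneg i t _) (Finset.mem_univ j)
      _ = 1 := S.pi_sum_one t (S.Z t ω)
  have hC0 : 0 ≤ C := le_trans (abs_nonneg _) (hC (Classical.arbitrary Ω))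
  -- step 1 : the claim for g replaced by `1_{g ⁻¹' u}`
  have step1 : ∀ u : Set ℝ, MeasurableSet u →
      ∫ ω, h' ω * (if S.A t ω = j then (g ⁻¹' u).indicator (fun _ => (1:ℝ)) ω else 0) ∂ν
        = ∫ ω, (h' ω * S.pi j t (S.Z t ω)) * (g ⁻¹' u).indicator (fun _ => (1:ℝ)) ω ∂ν := by
    intro u hu
    have hprod := (condIndepFun_iff_condExp_inter_preimage_eq_mul
      (S.measurable_A t) hgm).mp hci {j} u (measurableSet_singleton j) hu
    have hAset : (S.A t ⁻¹' {j}) = {ω | S.A t ω = j} := rfl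
    rw [hAset] at hprod
    have := key_indicator S j t ht (g ⁻¹' u) (hgm hu) hprod h' hh' C hC
    rw [← this]
    refine integral_congr_ae (Eventually.of_forall fun ω => ?_)
    by_cases hA : S.A t ω = j <;> by_cases hg : ω ∈ g ⁻¹' u <;>
      simp [hA, hg, Set.indicator_apply, Set.mem_inter_iff]
  -- integrability of bounded × (simple ∘ g)
  have hbint : ∀ (w : Ω → ℝ), Measurable w → (∃ D, ∀ ω, |w ω| ≤ D) →
      ∀ (χ : SimpleFunc ℝ ℝ), Integrable (fun ω => w ω * χ (g ω)) ν := by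
    rintro w hw ⟨D, hD⟩ χ
    obtain ⟨E, hE⟩ : ∃ E, ∀ x : ℝ, |χ x| ≤ E := by
      rcases (χ.map abs).exists_forall_le with ⟨E, hE⟩
      exact ⟨E, fun x => hE x⟩
    refine (integrable_const (D * E)).mono' ?_ ?_
    · exact (hw.mul ((χ.measurable).comp hgm)).aestronglyMeasurable
    · refine Eventually.of_forall fun ω => ?_
      rw [Real.norm_eq_abs, abs_mul]
      exact mul_le_mul (hD ω) (hE _) (abs_nonneg _) (le_trans (abs_nonneg _) (hD ω))
  have hw1 : Measurable (fun ω => h' ω * (if S.A t ω = j then (1:ℝ) else 0)) :=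
    hh'amb.mul (Measurable.ite (measurableSet_Aj S j t) measurable_const measurable_const)
  have hw1b : ∃ D, ∀ ω, |h' ω * (if S.A t ω = j then (1:ℝ) else 0)| ≤ D := by
    refine ⟨C, fun ω => ?_⟩
    rw [abs_mul]
    by_cases hA : S.A t ω = j
    · simp [hA]; exact hC ω
    · simp [hA]; exact hC0
  have hw2 : Measurable (fun ω => h' ω * S.pi j t (S.Z t ω)) := hh'amb.mul hπm
  have hw2b : ∃ D, ∀ ω, |h' ω * S.pi j t (S.Z t ω)| ≤ D := by
    refine ⟨C, fun ω => ?_⟩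
    rw [abs_mul, abs_of_nonneg (hπ01 ω).1]
    calc |h' ω| * S.pi j t (S.Z t ω) ≤ C * 1 :=
          mul_le_mul (hC ω) (hπ01 ω).2 (hπ01 ω).1 hC0
      _ = C := mul_one C
  -- step 2 : the claim for `φ ∘ g`, `φ` a real simple function
  have step2 : ∀ φ : SimpleFunc ℝ ℝ,
      ∫ ω, h' ω * (if S.A t ω = j then φ (g ω) else 0) ∂ν
        = ∫ ω, (h' ω * S.pi j t (S.Z t ω)) * φ (g ω) ∂ν := by
    intro φ
    induction φ using SimpleFunc.induction with
    | @const c u hu =>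
      calc ∫ ω, h' ω * (if S.A t ω = j then (SimpleFunc.piecewise u hu
              (SimpleFunc.const ℝ c) (SimpleFunc.const ℝ 0)) (g ω) else 0) ∂ν
          = ∫ ω, c * (h' ω * (if S.A t ω = j then
              (g ⁻¹' u).indicator (fun _ => (1:ℝ)) ω else 0)) ∂ν := by
            refine integral_congr_ae (Eventually.of_forall fun ω => ?_)
            by_cases hA : S.A t ω = j <;> by_cases hg : g ω ∈ u <;>
              simp [SimpleFunc.piecewise_apply, hA, hg, Set.indicator_apply,
                Set.mem_preimage] <;> ring
        _ = c * ∫ ω, h' ω * (if S.A t ω = j then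
              (g ⁻¹' u).indicator (fun _ => (1:ℝ)) ω else 0) ∂ν := integral_const_mul c _
        _ = c * ∫ ω, (h' ω * S.pi j t (S.Z t ω)) *
              (g ⁻¹' u).indicator (fun _ => (1:ℝ)) ω ∂ν := by rw [step1 u hu]
        _ = ∫ ω, c * ((h' ω * S.pi j t (S.Z t ω)) *
              (g ⁻¹' u).indicator (fun _ => (1:ℝ)) ω) ∂ν := (integral_const_mul c _).symm
        _ = _ := by
            refine integral_congr_ae (Eventually.of_forall fun ω => ?_)
            by_cases hg : g ω ∈ u <;>
              simp [SimpleFunc.piecewise_apply, hg, Set.indicator_apply,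
                Set.mem_preimage] <;> ring
    | @add p q hdisj hp hq =>
      have eq1 : ∀ (χ : SimpleFunc ℝ ℝ) ω, h' ω * (if S.A t ω = j then χ (g ω) else 0)
          = (h' ω * (if S.A t ω = j then (1:ℝ) else 0)) * χ (g ω) := by
        intro χ ω; by_cases hA : S.A t ω = j <;> simp [hA]
      calc ∫ ω, h' ω * (if S.A t ω = j then (p + q) (g ω) else 0) ∂ν
          = ∫ ω, (h' ω * (if S.A t ω = j then (1:ℝ) else 0)) * p (g ω)
              + (h' ω * (if S.A t ω = j then (1:ℝ) else 0)) * q (g ω) ∂ν := by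
            refine integral_congr_ae (Eventually.of_forall fun ω => ?_)
            by_cases hA : S.A t ω = j <;>
              simp [hA, SimpleFunc.coe_add, Pi.add_apply] <;> ring
        _ = (∫ ω, (h' ω * (if S.A t ω = j then (1:ℝ) else 0)) * p (g ω) ∂ν)
              + ∫ ω, (h' ω * (if S.A t ω = j then (1:ℝ) else 0)) * q (g ω) ∂ν :=
            integral_add (hbint _ hw1 hw1b p) (hbint _ hw1 hw1b q)
        _ = (∫ ω, h' ω * (if S.A t ω = j then p (g ω) else 0) ∂ν)
              + ∫ ω, h' ω * (if S.A t ω = j then q (g ω) else 0) ∂ν := by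
            rw [integral_congr_ae (Eventually.of_forall fun ω => (eq1 p ω).symm),
              integral_congr_ae (Eventually.of_forall fun ω => (eq1 q ω).symm)]
        _ = (∫ ω, (h' ω * S.pi j t (S.Z t ω)) * p (g ω) ∂ν)
              + ∫ ω, (h' ω * S.pi j t (S.Z t ω)) * q (g ω) ∂ν := by rw [hp, hq]
        _ = ∫ ω, (h' ω * S.pi j t (S.Z t ω)) * p (g ω)
              + (h' ω * S.pi j t (S.Z t ω)) * q (g ω) ∂ν :=
            (integral_add (hbint _ hw2 hw2b p) (hbint _ hw2 hw2b q)).symm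
        _ = _ := by
            refine integral_congr_ae (Eventually.of_forall fun ω => ?_)
            simp [SimpleFunc.coe_add, Pi.add_apply]; ring
  -- step 3 : approximate g by simple functions and pass to the limit
  set φn : ℕ → SimpleFunc ℝ ℝ :=
    fun n => SimpleFunc.approxOn (id : ℝ → ℝ) measurable_id Set.univ 0 (Set.mem_univ 0) n
    with hφn
  have hφtend : ∀ x : ℝ, Tendsto (fun n => φn n x) atTop (𝓝 x) := fun x =>
    SimpleFunc.tendsto_approxOn measurable_id (Set.mem_univ 0) (by simp)
  have hφbd : ∀ (n : ℕ) (x : ℝ), ‖φn n x‖ ≤ ‖x‖ + ‖x‖ := fun n x =>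
    SimpleFunc.norm_approxOn_zero_le measurable_id (Set.mem_univ 0) x n
  have hdom : Integrable (fun ω => C * (‖g ω‖ + ‖g ω‖)) ν :=
    ((hgi.norm).add hgi.norm).const_mul C
  have hbound : ∀ (w : Ω → ℝ), (∀ ω, |w ω| ≤ C) → ∀ (n : ℕ), ∀ᵐ ω ∂ν,
      ‖w ω * φn n (g ω)‖ ≤ C * (‖g ω‖ + ‖g ω‖) := by
    intro w hw n
    refine Eventually.of_forall fun ω => ?_
    rw [norm_mul]
    exact mul_le_mul (by rw [Real.norm_eq_abs]; exact hw ω) (hφbd n (g ω))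
      (norm_nonneg _) hC0
  have t1 : Tendsto (fun n => ∫ ω, h' ω * (if S.A t ω = j then φn n (g ω) else 0) ∂ν)
      atTop (𝓝 (∫ ω, h' ω * (if S.A t ω = j then g ω else 0) ∂ν)) := by
    apply tendsto_integral_of_dominated_convergence (fun ω => C * (‖g ω‖ + ‖g ω‖)) _ hdom
    · intro n
      refine Eventually.of_forall fun ω => ?_
      by_cases hA : S.A t ω = j
      · simpa [hA] using (by
          rw [norm_mul]
          exact mul_le_mul (by rw [Real.norm_eq_abs]; exact hC ω) (hφbd n (g ω))
            (norm_nonneg _) hC0 : ‖h' ω * φn n (g ω)‖ ≤ C * (‖g ω‖ + ‖g ω‖))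
      · simp [hA]
        positivity
    · refine Eventually.of_forall fun ω => ?_
      by_cases hA : S.A t ω = j
      · simp only [hA, if_true]
        exact tendsto_const_nhds.mul (hφtend (g ω))
      · simp only [hA, if_false]
        exact tendsto_const_nhds
    · intro n
      exact (hh'amb.mul (Measurable.ite (measurableSet_Aj S j t)
        (((φn n).measurable).comp hgm) measurable_const)).aestronglyMeasurable
  have t2 : Tendsto (fun n => ∫ ω, (h' ω * S.pi j t (S.Z t ω)) * φn n (g ω) ∂ν)
      atTop (𝓝 (∫ ω, (h' ω * S.pi j t (S.Z t ω)) * g ω ∂ν)) := by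
    apply tendsto_integral_of_dominated_convergence (fun ω => C * (‖g ω‖ + ‖g ω‖)) _ hdom
    · intro n
      refine Eventually.of_forall fun ω => ?_
      rw [norm_mul]
      refine mul_le_mul ?_ (hφbd n (g ω)) (norm_nonneg _) hC0
      rw [Real.norm_eq_abs]
      rcases hw2b with ⟨D, hD⟩
      calc |h' ω * S.pi j t (S.Z t ω)| = |h' ω| * S.pi j t (S.Z t ω) := by
            rw [abs_mul, abs_of_nonneg (hπ01 ω).1]
        _ ≤ C * 1 := mul_le_mul (hC ω) (hπ01 ω).2 (hπ01 ω).1 hC0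
        _ = C := mul_one C
    · refine Eventually.of_forall fun ω => ?_
      exact tendsto_const_nhds.mul (hφtend (g ω))
    · intro n
      exact (hw2.mul (((φn n).measurable).comp hgm)).aestronglyMeasurable
  have heq : ∀ n, ∫ ω, h' ω * (if S.A t ω = j then φn n (g ω) else 0) ∂ν
      = ∫ ω, (h' ω * S.pi j t (S.Z t ω)) * φn n (g ω) ∂ν := fun n => step2 (φn n)
  exact tendsto_nhds_unique (t1.congr fun n => heq n) t2

end AuxProof3
section AuxProof4

lemma tendsto_min_nat (a : ℝ) : Tendsto (fun M : ℕ => min a (M:ℝ)) atTop (𝓝 a) := by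
  refine tendsto_atTop_of_eventually_const (i₀ := ⌈a⌉₊) fun M hM => ?_
  exact min_eq_left (le_trans (Nat.le_ceil a) (by exact_mod_cast hM))

/-- Per-episode IPW identity: integrability and value of the IPW term. -/
lemma episode (S : Setup Ω 𝒵 𝒳 μ J Tmax) (j k : Fin J) (t : ℕ) (ht : 1 ≤ t)
    (g : Ω → ℝ) (hgm : Measurable g) (hgi : Integrable g μ)
    (hci : CondIndepFun (S.hist t) (S.hist_le t) (S.A t) g (μ.restrict {ω | t ≤ S.T ω})) :
    Integrable (fun ω => if ω ∈ ECE S j k t then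
        (if S.A t ω = j then g ω / S.pi j t (S.Z t ω) else 0) else 0) μ ∧
      ∫ ω, (if ω ∈ ECE S j k t then
          (if S.A t ω = j then g ω / S.pi j t (S.Z t ω) else 0) else 0) ∂μ
        = ∫ ω in ECE S j k t, g ω ∂μ := by
  classical
  set ν := μ.restrict {ω | t ≤ S.T ω} with hν
  haveI : IsFiniteMeasure ν :=
    ⟨lt_of_le_of_lt (Measure.restrict_apply_le _ _) (measure_lt_top μ _)⟩
  have hm : S.hist t ≤ ‹MeasurableSpace Ω› := S.hist_le t
  have hgiν : Integrable g ν := hgi.restrict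
  have habsi : Integrable (fun ω => |g ω|) ν := hgiν.abs
  have habsm : Measurable (fun ω => |g ω|) := continuous_abs.measurable.comp hgm
  have habsci : CondIndepFun (S.hist t) (S.hist_le t) (S.A t) (fun ω => |g ω|) ν :=
    hci.comp measurable_id continuous_abs.measurable
  set B := Bset S j k t with hB
  have hBm : MeasurableSet[S.hist t] B := measurableSet_Bset S j k t
  have hBm0 : MeasurableSet B := hm _ hBm
  have hπB : ∀ ω ∈ B, 0 < S.pi j t (S.Z t ω) := fun ω hω => hω.1
  set h : Ω → ℝ := B.indicator (fun ω => (S.pi j t (S.Z t ω))⁻¹) with hh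
  have hhm : Measurable[S.hist t] h := ((measurable_piZ S j t).inv).indicator hBm
  have hh0 : ∀ ω, 0 ≤ h ω := fun ω =>
    Set.indicator_apply_nonneg (fun _ => inv_nonneg.mpr (S.pi_nonneg j t _))
  set hM : ℕ → Ω → ℝ := fun M ω => min (h ω) M with hhM
  have hMm : ∀ M, Measurable[S.hist t] (hM M) := fun M => hhm.min measurable_const
  have hM0 : ∀ M ω, 0 ≤ hM M ω := fun M ω => le_min (hh0 ω) (Nat.cast_nonneg M)
  have hMb : ∀ M ω, |hM M ω| ≤ (M:ℝ) := fun M ω => by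
    rw [abs_of_nonneg (hM0 M ω)]; exact min_le_right _ _
  have hMle : ∀ M ω, hM M ω ≤ h ω := fun M ω => min_le_left _ _
  have hMzero : ∀ (M : ℕ) (ω : Ω), ω ∉ B → hM M ω = 0 := by
    intro M ω hωB
    have h1 : h ω = 0 := Set.indicator_of_notMem hωB _
    simp only [hhM]; rw [h1]; exact min_eq_left (Nat.cast_nonneg M)
  have hMπ1 : ∀ M ω, hM M ω * S.pi j t (S.Z t ω) ≤ 1 := by
    intro M ω
    by_cases hωB : ω ∈ B
    · calc hM M ω * S.pi j t (S.Z t ω) ≤ h ω * S.pi j t (S.Z t ω) :=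
            mul_le_mul_of_nonneg_right (hMle M ω) (S.pi_nonneg j t _)
        _ = (S.pi j t (S.Z t ω))⁻¹ * S.pi j t (S.Z t ω) := by
            rw [hh]; rw [Set.indicator_of_mem hωB]
        _ = 1 := inv_mul_cancel₀ (ne_of_gt (hπB ω hωB))
    · rw [hMzero M ω hωB, zero_mul]; exact zero_le_one
  have hMπ0 : ∀ M ω, 0 ≤ hM M ω * S.pi j t (S.Z t ω) := fun M ω =>
    mul_nonneg (hM0 M ω) (S.pi_nonneg j t _)
  -- key applied to `g` and `|g|`
  have keyg : ∀ M : ℕ, ∫ ω, hM M ω * (if S.A t ω = j then g ω else 0) ∂ν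
      = ∫ ω, (hM M ω * S.pi j t (S.Z t ω)) * g ω ∂ν := fun M =>
    key S j t ht g hgm hgiν hci (hM M) (hMm M) M (hMb M)
  have keyabs : ∀ M : ℕ, ∫ ω, hM M ω * (if S.A t ω = j then |g ω| else 0) ∂ν
      = ∫ ω, (hM M ω * S.pi j t (S.Z t ω)) * |g ω| ∂ν := fun M =>
    key S j t ht (fun ω => |g ω|) habsm habsi habsci (hM M) (hMm M) M (hMb M)
  -- measurable/integrable pieces
  have hsgm : Measurable (fun ω => if S.A t ω = j then g ω else 0) :=
    Measurable.ite (measurableSet_Aj S j t) hgm measurable_const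
  have hsabsm : Measurable (fun ω => if S.A t ω = j then |g ω| else 0) :=
    Measurable.ite (measurableSet_Aj S j t) habsm measurable_const
  have hsabs_nonneg : ∀ ω, 0 ≤ (if S.A t ω = j then |g ω| else 0) := by
    intro ω; split
    · exact abs_nonneg _
    · exact le_rfl
  have hsabs_le : ∀ ω, (if S.A t ω = j then |g ω| else 0) ≤ |g ω| := by
    intro ω; split
    · exact le_rfl
    · exact abs_nonneg _
  have habs_ite : ∀ ω, |if S.A t ω = j then g ω else 0|
      = (if S.A t ω = j then |g ω| else 0) := by
    intro ω; by_cases hA : S.A t ω = j <;> simp [hA]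
  have hsabsi : Integrable (fun ω => if S.A t ω = j then |g ω| else 0) ν := by
    refine habsi.mono' hsabsm.aestronglyMeasurable (Eventually.of_forall fun ω => ?_)
    rw [Real.norm_eq_abs, abs_of_nonneg (hsabs_nonneg ω)]
    exact hsabs_le ω
  have hhamb : Measurable h := hhm.mono hm le_rfl
  have hMamb : ∀ M, Measurable (hM M) := fun M => (hMm M).mono hm le_rfl
  have hπm : Measurable (fun ω => S.pi j t (S.Z t ω)) :=
    (measurable_piZ S j t).mono hm le_rfl
  -- the limiting functions
  set G : Ω → ℝ := fun ω => h ω * (if S.A t ω = j then g ω else 0) with hG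
  set Gabs : Ω → ℝ := fun ω => h ω * (if S.A t ω = j then |g ω| else 0) with hGabs
  have hGm : Measurable G := hhamb.mul hsgm
  have hGabsm : Measurable Gabs := hhamb.mul hsabsm
  have hGabs0 : ∀ ω, 0 ≤ Gabs ω := fun ω => mul_nonneg (hh0 ω) (hsabs_nonneg ω)
  have hGabsabs : ∀ ω, |G ω| = Gabs ω := by
    intro ω
    simp only [hG, hGabs]
    rw [abs_mul, abs_of_nonneg (hh0 ω), habs_ite ω]
  have hMint : ∀ M : ℕ, Integrable (fun ω => hM M ω *
      (if S.A t ω = j then |g ω| else 0)) ν := fun M =>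
    hsabsi.bdd_mul (hMamb M).aestronglyMeasurable
      (Eventually.of_forall fun ω => by rw [Real.norm_eq_abs]; exact hMb M ω)
  have hmono : ∀ ω, Monotone (fun M : ℕ => hM M ω) := fun ω M N hMN =>
    min_le_min le_rfl (Nat.cast_le.mpr hMN)
  have htendh : ∀ ω, Tendsto (fun M : ℕ => hM M ω) atTop (𝓝 (h ω)) := fun ω =>
    tendsto_min_nat (h ω)
  -- bound the integrals of the truncations
  have hIbound : ∀ M : ℕ, ∫ ω, hM M ω * (if S.A t ω = j then |g ω| else 0) ∂ν
      ≤ ∫ ω, |g ω| ∂ν := by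
    intro M
    rw [keyabs M]
    refine integral_mono ?_ habsi fun ω => ?_
    · exact habsi.bdd_mul ((hMamb M).mul hπm).aestronglyMeasurable
        (Eventually.of_forall fun ω => by
          rw [Real.norm_eq_abs, abs_of_nonneg (hMπ0 M ω)]; exact hMπ1 M ω)
    · exact mul_le_of_le_one_left (abs_nonneg _) (hMπ1 M ω)
  -- Gabs is integrable
  have hGabsfin : ∫⁻ ω, ENNReal.ofReal (Gabs ω) ∂ν ≤ ENNReal.ofReal (∫ ω, |g ω| ∂ν) := by
    have hlim : Tendsto (fun M : ℕ => ∫⁻ ω, ENNReal.ofReal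
        (hM M ω * (if S.A t ω = j then |g ω| else 0)) ∂ν) atTop
        (𝓝 (∫⁻ ω, ENNReal.ofReal (Gabs ω) ∂ν)) := by
      apply lintegral_tendsto_of_tendsto_of_monotone
      · intro M
        exact (ENNReal.measurable_ofReal.comp ((hMamb M).mul hsabsm)).aemeasurable
      · refine Eventually.of_forall fun ω M N hMN => ?_
        exact ENNReal.ofReal_le_ofReal
          (mul_le_mul_of_nonneg_right (hmono ω hMN) (hsabs_nonneg ω))
      · refine Eventually.of_forall fun ω => ?_
        exact (ENNReal.continuous_ofReal.tendsto _).comp ((htendh ω).mul_const _)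
    refine le_of_tendsto hlim (Eventually.of_forall fun M => ?_)
    rw [← ofReal_integral_eq_lintegral_ofReal (hMint M)
      (Eventually.of_forall fun ω => mul_nonneg (hM0 M ω) (hsabs_nonneg ω))]
    exact ENNReal.ofReal_le_ofReal (hIbound M)
  have hGabsi : Integrable Gabs ν := by
    refine ⟨hGabsm.aestronglyMeasurable, ?_⟩
    rw [hasFiniteIntegral_iff_norm]
    refine lt_of_le_of_lt ?_ (lt_of_le_of_lt hGabsfin ENNReal.ofReal_lt_top)
    refine le_of_eq (lintegral_congr fun ω => ?_)
    rw [Real.norm_eq_abs, abs_of_nonneg (hGabs0 ω)]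
  have hGi : Integrable G ν := by
    refine hGabsi.mono' hGm.aestronglyMeasurable (Eventually.of_forall fun ω => ?_)
    rw [Real.norm_eq_abs, hGabsabs ω]
  -- limits of both sides of `keyg`
  have tendL : Tendsto (fun M : ℕ => ∫ ω, hM M ω * (if S.A t ω = j then g ω else 0) ∂ν)
      atTop (𝓝 (∫ ω, G ω ∂ν)) := by
    apply tendsto_integral_of_dominated_convergence Gabs _ hGabsi
    · intro M
      refine Eventually.of_forall fun ω => ?_
      rw [Real.norm_eq_abs, abs_mul, abs_of_nonneg (hM0 M ω), habs_ite ω]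
      exact mul_le_mul_of_nonneg_right (hMle M ω) (hsabs_nonneg ω)
    · exact Eventually.of_forall fun ω => (htendh ω).mul_const _
    · exact fun M => ((hMamb M).mul hsgm).aestronglyMeasurable
  have tendR : Tendsto (fun M : ℕ => ∫ ω, (hM M ω * S.pi j t (S.Z t ω)) * g ω ∂ν)
      atTop (𝓝 (∫ ω, B.indicator g ω ∂ν)) := by
    apply tendsto_integral_of_dominated_convergence (fun ω => |g ω|) _ habsi
    · intro M
      refine Eventually.of_forall fun ω => ?_
      rw [Real.norm_eq_abs, abs_mul, abs_of_nonneg (hMπ0 M ω)]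
      exact mul_le_of_le_one_left (abs_nonneg _) (hMπ1 M ω)
    · refine Eventually.of_forall fun ω => ?_
      by_cases hωB : ω ∈ B
      · have h1 : B.indicator g ω = g ω := Set.indicator_of_mem hωB g
        have h2 : h ω * S.pi j t (S.Z t ω) = 1 := by
          rw [hh]; rw [Set.indicator_of_mem hωB]
          exact inv_mul_cancel₀ (ne_of_gt (hπB ω hωB))
        have h3 := ((htendh ω).mul_const (S.pi j t (S.Z t ω))).mul_const (g ω)
        rw [h2, one_mul] at h3
        rw [h1]
        exact h3
      · have h1 : B.indicator g ω = 0 := Set.indicator_of_notMem hωB g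
        have h2 : (fun M : ℕ => (hM M ω * S.pi j t (S.Z t ω)) * g ω) = fun _ => 0 := by
          funext M; rw [hMzero M ω hωB]; ring
        rw [h1, h2]
        exact tendsto_const_nhds
    · exact fun M => (((hMamb M).mul hπm).mul hgm).aestronglyMeasurable
  have hGB : ∫ ω, G ω ∂ν = ∫ ω in ECE S j k t, g ω ∂μ := by
    have h1 : ∫ ω, G ω ∂ν = ∫ ω, B.indicator g ω ∂ν :=
      tendsto_nhds_unique ((tendL.congr fun M => keyg M)) tendR
    rw [h1, integral_indicator hBm0]
    rw [hν, Measure.restrict_restrict hBm0, ← ECE_eq]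
  -- put everything together, going from `μ` to `ν`
  have hFT : ∀ ω, ω ∉ {ω | t ≤ S.T ω} → (if ω ∈ ECE S j k t then
      (if S.A t ω = j then g ω / S.pi j t (S.Z t ω) else 0) else 0) = 0 := by
    intro ω hω
    rw [if_neg]
    exact fun hE => hω hE.2.2
  have hFG : ∀ ω ∈ {ω | t ≤ S.T ω}, (if ω ∈ ECE S j k t then
      (if S.A t ω = j then g ω / S.pi j t (S.Z t ω) else 0) else 0) = G ω := by
    intro ω hω
    simp only [hG]
    by_cases hωB : ω ∈ B
    · have hE : ω ∈ ECE S j k t := by rw [ECE_eq]; exact ⟨hωB, hω⟩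
      rw [if_pos hE, hh, Set.indicator_of_mem hωB]
      by_cases hA : S.A t ω = j
      · rw [if_pos hA, if_pos hA, div_eq_inv_mul]
      · rw [if_neg hA, if_neg hA, mul_zero]
    · have hE : ω ∉ ECE S j k t := by rw [ECE_eq]; exact fun hc => hωB hc.1
      rw [if_neg hE, hh, Set.indicator_of_notMem hωB, zero_mul]
  have hFeq : (fun ω => if ω ∈ ECE S j k t then
      (if S.A t ω = j then g ω / S.pi j t (S.Z t ω) else 0) else 0)
      = Set.indicator {ω | t ≤ S.T ω} (fun ω => if ω ∈ ECE S j k t then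
        (if S.A t ω = j then g ω / S.pi j t (S.Z t ω) else 0) else 0) := by
    funext ω
    by_cases hω : ω ∈ {ω | t ≤ S.T ω}
    · rw [Set.indicator_of_mem hω]
    · rw [Set.indicator_of_notMem hω, hFT ω hω]
  have hFν : (fun ω => if ω ∈ ECE S j k t then
      (if S.A t ω = j then g ω / S.pi j t (S.Z t ω) else 0) else 0) =ᵐ[ν] G := by
    filter_upwards [ae_restrict_mem (measurableSet_TgE S t)] with ω hω
    exact hFG ω hω
  constructor
  · rw [hFeq, integrable_indicator_iff (measurableSet_TgE S t)]
    exact hGi.congr hFν.symm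
  · calc ∫ ω, (if ω ∈ ECE S j k t then
          (if S.A t ω = j then g ω / S.pi j t (S.Z t ω) else 0) else 0) ∂μ
        = ∫ ω, Set.indicator {ω | t ≤ S.T ω} (fun ω => if ω ∈ ECE S j k t then
            (if S.A t ω = j then g ω / S.pi j t (S.Z t ω) else 0) else 0) ω ∂μ := by
          rw [← hFeq]
      _ = ∫ ω in {ω | t ≤ S.T ω}, (if ω ∈ ECE S j k t then
            (if S.A t ω = j then g ω / S.pi j t (S.Z t ω) else 0) else 0) ∂μ :=
          integral_indicator (measurableSet_TgE S t)
      _ = ∫ ω, G ω ∂ν := integral_congr_ae hFν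
      _ = ∫ ω in ECE S j k t, g ω ∂μ := hGB

end AuxProof4
section AuxProof5

lemma cond_int (s : Set Ω) (hs : MeasurableSet s) (f : Ω → ℝ) :
    (μ s).toReal * ∫ ω, f ω ∂(μ[|s]) = ∫ ω in s, f ω ∂μ := by
  by_cases h0 : μ s = 0
  · rw [Measure.restrict_eq_zero.mpr h0, h0]
    simp
  · rw [ProbabilityTheory.cond, integral_smul_measure, ENNReal.toReal_inv, smul_eq_mul,
      ← mul_assoc, mul_inv_cancel₀
        (ENNReal.toReal_ne_zero.mpr ⟨h0, measure_ne_top μ s⟩), one_mul]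

variable (S : Setup Ω 𝒵 𝒳 μ J Tmax) (j k : Fin J)

lemma integrable_ipwNum_term (t : ℕ) (ht : t ∈ Finset.Icc 1 Tmax) :
    Integrable (fun ω => if ω ∈ ECE S j k t then
        (if S.A t ω = j then S.Y t ω / S.pi j t (S.Z t ω) else 0) else 0) μ ∧
      ∫ ω, (if ω ∈ ECE S j k t then
          (if S.A t ω = j then S.Y t ω / S.pi j t (S.Z t ω) else 0) else 0) ∂μ
        = probECE S j k t * thetaT S j k t := by
  have ht1 : 1 ≤ t := (Finset.mem_Icc.mp ht).1
  have hep := episode S j k t ht1 (S.Ypot t j) (S.measurable_Ypot t j)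
    (S.integrable_Ypot t j) (S.rand_indep t ht1 j)
  have hptwise : ∀ ω, (if ω ∈ ECE S j k t then
      (if S.A t ω = j then S.Y t ω / S.pi j t (S.Z t ω) else 0) else 0)
      = (if ω ∈ ECE S j k t then
        (if S.A t ω = j then S.Ypot t j ω / S.pi j t (S.Z t ω) else 0) else 0) := by
    intro ω
    by_cases hE : ω ∈ ECE S j k t
    · by_cases hA : S.A t ω = j
      · rw [if_pos hE, if_pos hE, if_pos hA, if_pos hA, S.consistency t ω, hA]
      · rw [if_pos hE, if_pos hE, if_neg hA, if_neg hA]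
    · rw [if_neg hE, if_neg hE]
  constructor
  · exact hep.1.congr (Eventually.of_forall fun ω => (hptwise ω).symm)
  · rw [integral_congr_ae (Eventually.of_forall fun ω => hptwise ω), hep.2,
      probECE, thetaT, cond_int (ECE S j k t) (measurableSet_ECE S j k t)]

lemma integral_ipwNum :
    Integrable (ipwNum S j k) μ ∧
      ∫ ω, ipwNum S j k ω ∂μ
        = ∑ t ∈ Finset.Icc 1 Tmax, probECE S j k t * thetaT S j k t := by
  constructor
  · exact integrable_finset_sum _ (fun t ht => (integrable_ipwNum_term S j k t ht).1)
  · have hrw : ∀ ω, ipwNum S j k ω = ∑ t ∈ Finset.Icc 1 Tmax,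
        (if ω ∈ ECE S j k t then
          (if S.A t ω = j then S.Y t ω / S.pi j t (S.Z t ω) else 0) else 0) :=
      fun ω => rfl
    rw [integral_congr_ae (Eventually.of_forall hrw),
      integral_finset_sum _ (fun t ht => (integrable_ipwNum_term S j k t ht).1)]
    exact Finset.sum_congr rfl fun t ht => (integrable_ipwNum_term S j k t ht).2

end AuxProof5
section AuxProof6

variable (S : Setup Ω 𝒵 𝒳 μ J Tmax) (j k : Fin J)

lemma measurable_piZ_amb (t : ℕ) : Measurable (fun ω => S.pi j t (S.Z t ω)) :=
  (measurable_piZ S j t).mono (S.hist_le t) le_rfl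

lemma measurable_ipwNum : Measurable (ipwNum S j k) :=
  Finset.measurable_sum _ fun t _ =>
    Measurable.ite (measurableSet_ECE S j k t)
      (Measurable.ite (measurableSet_Aj S j t)
        ((S.measurable_Y t).div (measurable_piZ_amb S j t)) measurable_const)
      measurable_const

lemma measurable_eceCount : Measurable (eceCount S j k) :=
  Finset.measurable_sum _ fun t _ =>
    Measurable.ite (measurableSet_ECE S j k t) measurable_const measurable_const

lemma measurable_ipwWeight : Measurable (ipwWeight S j k) :=
  Finset.measurable_sum _ fun t _ =>
    Measurable.ite (measurableSet_ECE S j k t)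
      (Measurable.ite (measurableSet_Aj S j t)
        (measurable_const.div (measurable_piZ_amb S j t)) measurable_const)
      measurable_const

lemma integral_eceCount :
    Integrable (eceCount S j k) μ ∧
      ∫ ω, eceCount S j k ω ∂μ = ∑ t ∈ Finset.Icc 1 Tmax, probECE S j k t := by
  have hterm : ∀ t : ℕ, (fun ω => if ω ∈ ECE S j k t then (1:ℝ) else 0)
      = (ECE S j k t).indicator (fun _ => (1:ℝ)) := by
    intro t; funext ω; rw [Set.indicator_apply]
  have hint : ∀ t : ℕ, t ∈ Finset.Icc 1 Tmax →
      Integrable (fun ω => if ω ∈ ECE S j k t then (1:ℝ) else 0) μ := by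
    intro t _
    rw [hterm t]
    exact (integrable_const (1:ℝ)).indicator (measurableSet_ECE S j k t)
  constructor
  · exact integrable_finset_sum _ hint
  · have hrw : ∀ ω, eceCount S j k ω = ∑ t ∈ Finset.Icc 1 Tmax,
        (if ω ∈ ECE S j k t then (1:ℝ) else 0) := fun ω => rfl
    rw [integral_congr_ae (Eventually.of_forall hrw), integral_finset_sum _ hint]
    refine Finset.sum_congr rfl fun t _ => ?_
    rw [hterm t, integral_indicator_const (1:ℝ) (measurableSet_ECE S j k t),
      smul_eq_mul, mul_one, probECE, measureReal_def]

lemma integral_ipwWeight :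
    Integrable (ipwWeight S j k) μ ∧
      ∫ ω, ipwWeight S j k ω ∂μ = ∑ t ∈ Finset.Icc 1 Tmax, probECE S j k t := by
  have hterm : ∀ t : ℕ, t ∈ Finset.Icc 1 Tmax →
      Integrable (fun ω => if ω ∈ ECE S j k t then
          (if S.A t ω = j then (1:ℝ) / S.pi j t (S.Z t ω) else 0) else 0) μ ∧
        ∫ ω, (if ω ∈ ECE S j k t then
            (if S.A t ω = j then (1:ℝ) / S.pi j t (S.Z t ω) else 0) else 0) ∂μ
          = probECE S j k t := by
    intro t ht
    have ht1 : 1 ≤ t := (Finset.mem_Icc.mp ht).1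
    haveI : IsFiniteMeasure (μ.restrict {ω | t ≤ S.T ω}) :=
      ⟨lt_of_le_of_lt (Measure.restrict_apply_le _ _) (measure_lt_top μ _)⟩
    have hep := episode S j k t ht1 (fun _ => (1:ℝ)) measurable_const
      (integrable_const 1) (condIndepFun_const S t _ 1)
    refine ⟨hep.1, ?_⟩
    rw [hep.2, setIntegral_const, smul_eq_mul, mul_one, probECE, measureReal_def]
  constructor
  · exact integrable_finset_sum _ (fun t ht => (hterm t ht).1)
  · have hrw : ∀ ω, ipwWeight S j k ω = ∑ t ∈ Finset.Icc 1 Tmax,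
        (if ω ∈ ECE S j k t then
          (if S.A t ω = j then (1:ℝ) / S.pi j t (S.Z t ω) else 0) else 0) := fun ω => rfl
    rw [integral_congr_ae (Eventually.of_forall hrw),
      integral_finset_sum _ (fun t ht => (hterm t ht).1)]
    exact Finset.sum_congr rfl fun t ht => (hterm t ht).2

end AuxProof6
section AuxProof7

variable {Ω' : Type*} [MeasurableSpace Ω'] (P : Measure Ω') [IsProbabilityMeasure P]

/-- Strong law of large numbers for an i.i.d. sample composed with an integrable statistic. -/
lemma lln_comp (X : ℕ → Ω' → Ω) (hX : IIDSample P μ X) (f : Ω → ℝ)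
    (hfm : Measurable f) (hfi : Integrable f μ) :
    ∀ᵐ ω' ∂P, Tendsto (fun n : ℕ => (n:ℝ)⁻¹ * ∑ i ∈ Finset.range n, f (X i ω'))
      atTop (𝓝 (∫ ω, f ω ∂μ)) := by
  set Y : ℕ → Ω' → ℝ := fun i ω' => f (X i ω') with hY
  have hYm : ∀ i, Measurable (Y i) := fun i => hfm.comp (hX.measurable i)
  have hint : Integrable (Y 0) P := by
    have h0 : Integrable f (Measure.map (X 0) P) := by rw [hX.ident 0]; exact hfi
    exact (integrable_map_measure hfm.aestronglyMeasurable
      ((hX.measurable 0).aemeasurable)).mp h0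
  have hindep : Pairwise (Function.onFun (IndepFun · · P) Y) := fun i j hij =>
    (hX.indep.comp (fun _ => f) (fun _ => hfm)).indepFun hij
  have hident : ∀ i, ProbabilityTheory.IdentDistrib (Y i) (Y 0) P P := fun i =>
    ⟨(hYm i).aemeasurable, (hYm 0).aemeasurable, by
      have hmap : ∀ i', Measure.map (Y i') P = Measure.map f μ := by
        intro i'
        rw [hY, show (fun i ω' => f (X i ω')) i' = f ∘ X i' from rfl,
          ← Measure.map_map hfm (hX.measurable i'), hX.ident i']
      rw [hmap i, hmap 0]⟩
  have hexp : ∫ ω', Y 0 ω' ∂P = ∫ ω, f ω ∂μ := by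
    rw [hY, ← integral_map ((hX.measurable 0).aemeasurable) hfm.aestronglyMeasurable,
      hX.ident 0]
  have := ProbabilityTheory.strong_law_ae Y hint hindep hident
  filter_upwards [this] with ω' hω'
  rw [← hexp]
  simpa [smul_eq_mul] using hω'

end AuxProof7
section Statement

variable {Ω' : Type*} [MeasurableSpace Ω'] (P : Measure Ω') [IsProbabilityMeasure P]

/-- under Assumption 1 and consistency, if `Σ_t P(I_{jkt} = 1) > 0` and the
per-individual summed IPW terms are integrable, the IPW and stabilized IPW estimators are
consistent in probability for `θ_{jk}`. -/
theorem ipw_sipw_consistent (S : Setup Ω 𝒵 𝒳 μ J Tmax) (j k : Fin J)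
    (X : ℕ → Ω' → Ω) (hX : IIDSample P μ X)
    (hpos : 0 < ∑ t ∈ Finset.Icc 1 Tmax, probECE S j k t)
    (hint : Integrable (ipwNum S j k) μ) :
    TendstoInProb P (fun n ω' => ipwEst S j k X n ω') (theta S j k) ∧
      TendstoInProb P (fun n ω' => sipwEst S j k X n ω') (theta S j k) := by
  classical
  obtain ⟨hNint, hNval⟩ := integral_ipwNum S j k
  obtain ⟨hDint, hDval⟩ := integral_eceCount S j k
  obtain ⟨hWint, hWval⟩ := integral_ipwWeight S j k
  have hDne : (∑ t ∈ Finset.Icc 1 Tmax, probECE S j k t) ≠ 0 := ne_of_gt hpos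
  have h1 := lln_comp P X hX (ipwNum S j k) (measurable_ipwNum S j k) hNint
  have h2 := lln_comp P X hX (eceCount S j k) (measurable_eceCount S j k) hDint
  have h3 := lln_comp P X hX (ipwWeight S j k) (measurable_ipwWeight S j k) hWint
  rw [hNval] at h1
  rw [hDval] at h2
  rw [hWval] at h3
  have htheta : theta S j k = (∑ t ∈ Finset.Icc 1 Tmax, probECE S j k t * thetaT S j k t)
      / (∑ t ∈ Finset.Icc 1 Tmax, probECE S j k t) := rfl
  -- a.e. convergence of the two estimators
  have hae1 : ∀ᵐ ω' ∂P, Tendsto (fun n => ipwEst S j k X n ω') atTop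
      (𝓝 (theta S j k)) := by
    filter_upwards [h1, h2] with ω' hn hd
    rw [htheta]
    refine (hn.div hd hDne).congr fun n => ?_
    show ((n:ℝ)⁻¹ * ∑ i ∈ Finset.range n, ipwNum S j k (X i ω')) /
        ((n:ℝ)⁻¹ * ∑ i ∈ Finset.range n, eceCount S j k (X i ω'))
      = (∑ i ∈ Finset.range n, ipwNum S j k (X i ω')) /
        (∑ i ∈ Finset.range n, eceCount S j k (X i ω'))
    rcases Nat.eq_zero_or_pos n with hn0 | hn0
    · subst hn0; simp
    · exact mul_div_mul_left _ _ (inv_ne_zero (Nat.cast_ne_zero.mpr hn0.ne'))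
  have hae2 : ∀ᵐ ω' ∂P, Tendsto (fun n => sipwEst S j k X n ω') atTop
      (𝓝 (theta S j k)) := by
    filter_upwards [h1, h3] with ω' hn hw
    rw [htheta]
    refine (hn.div hw hDne).congr fun n => ?_
    show ((n:ℝ)⁻¹ * ∑ i ∈ Finset.range n, ipwNum S j k (X i ω')) /
        ((n:ℝ)⁻¹ * ∑ i ∈ Finset.range n, ipwWeight S j k (X i ω'))
      = (∑ i ∈ Finset.range n, ipwNum S j k (X i ω')) /
        (∑ i ∈ Finset.range n, ipwWeight S j k (X i ω'))
    rcases Nat.eq_zero_or_pos n with hn0 | hn0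
    · subst hn0; simp
    · exact mul_div_mul_left _ _ (inv_ne_zero (Nat.cast_ne_zero.mpr hn0.ne'))
  -- measurability of the estimators
  have hmeas1 : ∀ n : ℕ, AEStronglyMeasurable (fun ω' => ipwEst S j k X n ω') P :=
    fun n => (Measurable.div
      (Finset.measurable_sum _ fun i _ => (measurable_ipwNum S j k).comp (hX.measurable i))
      (Finset.measurable_sum _ fun i _ =>
        (measurable_eceCount S j k).comp (hX.measurable i))).aestronglyMeasurable
  have hmeas2 : ∀ n : ℕ, AEStronglyMeasurable (fun ω' => sipwEst S j k X n ω') P :=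
    fun n => (Measurable.div
      (Finset.measurable_sum _ fun i _ => (measurable_ipwNum S j k).comp (hX.measurable i))
      (Finset.measurable_sum _ fun i _ =>
        (measurable_ipwWeight S j k).comp (hX.measurable i))).aestronglyMeasurable
  -- a.e. convergence implies convergence in probability
  have hconv : ∀ (W : ℕ → Ω' → ℝ), (∀ n, AEStronglyMeasurable (W n) P) →
      (∀ᵐ ω' ∂P, Tendsto (fun n => W n ω') atTop (𝓝 (theta S j k))) →
      TendstoInProb P W (theta S j k) := by
    intro W hWm hWae ε hε
    have := tendstoInMeasure_iff_dist.mp (tendstoInMeasure_of_tendsto_ae (g := fun _ => theta S j k) hWm hWae) ε hε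
    simpa only [Real.dist_eq] using this
  exact ⟨hconv _ hmeas1 hae1, hconv _ hmeas2 hae2⟩

end Statement

end MasterProtocol
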